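/- Non-robustness of diagonal-gate entanglement: let ρ be a state on a tripartite system A⊗B⊗C (with B, C qubits) that is separable across the cut AB|C. Let U = |0⟩⟨0|⊗U₀ + |1⟩⟨1|⊗U₁ be a diagonal-block two-qubit gate acting on B⊗C. Then Tr_B[(I_A⊗U) ρ (I_A⊗U)†] is a separable state across the cut A|C. -/

import Mathlib

/-!
Write ρ = ∑ᵢ pᵢ σᵢ ⊗ τᵢ across AB|C. The gate conjugates the C-factor of the B-block ⟨b|σᵢ|b'⟩ by
U_b on the left and U_{b'} on the right, and the partial trace over B keeps only the diagonal blocks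
b = b'. Hence the result is ∑_{i,b} pᵢ ⟨b|σᵢ|b⟩ ⊗ U_b τᵢ U_b†, a sum of tensor products of positive
semidefinite matrices, which is separable once each factor is normalised to unit trace.
-/

open Complex Matrix
open scoped ComplexOrder
noncomputable section

variable {α : Type} [Fintype α] [DecidableEq α]

/-- A density operator: positive semidefinite with unit trace. -/
def IsState {n : Type} [Fintype n] [DecidableEq n] (ρ : Matrix n n ℂ) : Prop :=
  ρ.PosSemidef ∧ ρ.trace = 1

/-- Separability of a state on A⊗B⊗C across the cut AB|C. -/
def SepABC (ρ : Matrix (α × Fin 2 × Fin 2) (α × Fin 2 × Fin 2) ℂ) : Prop :=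
  ∃ (k : ℕ) (p : Fin k → ℝ) (σ : Fin k → Matrix (α × Fin 2) (α × Fin 2) ℂ)
    (τ : Fin k → Matrix (Fin 2) (Fin 2) ℂ),
    (∀ i, 0 ≤ p i) ∧ (∀ i, IsState (σ i)) ∧ (∀ i, IsState (τ i)) ∧
    ∀ x x' b b' c c',
      ρ (x, b, c) (x', b', c') = ∑ i, (p i : ℂ) * σ i (x, b) (x', b') * τ i c c'

/-- Separability of a state on A⊗C across the cut A|C. -/
def SepAC (ρ : Matrix (α × Fin 2) (α × Fin 2) ℂ) : Prop :=
  ∃ (k : ℕ) (p : Fin k → ℝ) (σ : Fin k → Matrix α α ℂ)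
    (τ : Fin k → Matrix (Fin 2) (Fin 2) ℂ),
    (∀ i, 0 ≤ p i) ∧ (∀ i, IsState (σ i)) ∧ (∀ i, IsState (τ i)) ∧
    ∀ x x' c c', ρ (x, c) (x', c') = ∑ i, (p i : ℂ) * σ i x x' * τ i c c'

/-- Partial trace over the middle (B) system. -/
def ptraceB (ρ : Matrix (α × Fin 2 × Fin 2) (α × Fin 2 × Fin 2) ℂ) :
    Matrix (α × Fin 2) (α × Fin 2) ℂ :=
  fun p q => ∑ b : Fin 2, ρ (p.1, b, p.2) (q.1, b, q.2)

/-- I_A ⊗ U where U = |0⟩⟨0|⊗U₀ + |1⟩⟨1|⊗U₁ is the block-diagonal two-qubit gate on B⊗C. -/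
def IAU (U₀ U₁ : Matrix (Fin 2) (Fin 2) ℂ) :
    Matrix (α × Fin 2 × Fin 2) (α × Fin 2 × Fin 2) ℂ :=
  fun p q =>
    if p.1 = q.1 ∧ p.2.1 = q.2.1 then
      (if p.2.1 = 0 then U₀ else U₁) p.2.2 q.2.2
    else 0

theorem exists_isState {n : Type} [Fintype n] [DecidableEq n] [Nonempty n] :
    ∃ S : Matrix n n ℂ, IsState S := by
  obtain ⟨a⟩ := ‹Nonempty n›
  refine ⟨diagonal (Pi.single a 1), PosSemidef.diagonal (Pi.single_nonneg.mpr zero_le_one), ?_⟩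
  simp [diagonal_single]

theorem Matrix.PosSemidef.exists_eq_smul_isState {n : Type} [Fintype n] [DecidableEq n]
    [Nonempty n] {A : Matrix n n ℂ} (hA : A.PosSemidef) :
    ∃ r : ℝ, 0 ≤ r ∧ ∃ S, IsState S ∧ A = (r : ℂ) • S := by
  by_cases htr : A.trace = 0
  · obtain ⟨S, hS⟩ := exists_isState (n := n)
    exact ⟨0, le_rfl, S, hS, by simp [hA.trace_eq_zero_iff.mp htr]⟩
  obtain ⟨r, hr, hrA⟩ := RCLike.nonneg_iff_exists_ofReal.mp hA.trace_nonneg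
  change (r : ℂ) = A.trace at hrA
  have hr0 : (r : ℂ) ≠ 0 := hrA ▸ htr
  refine ⟨r, hr, (r⁻¹ : ℂ) • A, ⟨hA.smul ?_, ?_⟩, by simp [smul_smul, hr0]⟩
  · exact_mod_cast inv_nonneg.mpr hr
  · rw [trace_smul, ← hrA, smul_eq_mul, inv_mul_cancel₀ hr0]

theorem sepAC_of_posSemidef_decomposition {ι : Type} [Fintype ι]
    (ρ : Matrix (α × Fin 2) (α × Fin 2) ℂ)
    (A : ι → Matrix α α ℂ) (B : ι → Matrix (Fin 2) (Fin 2) ℂ)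
    (hA : ∀ i, (A i).PosSemidef) (hB : ∀ i, (B i).PosSemidef)
    (hρ : ∀ x x' c c', ρ (x, c) (x', c') = ∑ i, A i x x' * B i c c') :
    SepAC ρ := by
  cases isEmpty_or_nonempty α
  · exact ⟨0, 0, 0, 0, nofun, nofun, nofun, fun x => isEmptyElim x⟩
  choose r hr S hS hAS using fun i => (hA i).exists_eq_smul_isState
  choose s hs T hT hBT using fun i => (hB i).exists_eq_smul_isState
  let e := Fintype.equivFin ι
  refine ⟨Fintype.card ι, fun j => r (e.symm j) * s (e.symm j), fun j => S (e.symm j),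
    fun j => T (e.symm j), fun j => mul_nonneg (hr _) (hs _), fun j => hS _, fun j => hT _,
    fun x x' c c' => ?_⟩
  rw [hρ, ← e.sum_comp]
  refine Fintype.sum_congr _ _ fun i => ?_
  simp only [Equiv.symm_apply_apply, hAS, hBT, Matrix.smul_apply, smul_eq_mul, Complex.ofReal_mul]
  ring

def gateBlock (U₀ U₁ : Matrix (Fin 2) (Fin 2) ℂ) (b : Fin 2) : Matrix (Fin 2) (Fin 2) ℂ :=
  if b = 0 then U₀ else U₁

section

variable (U₀ U₁ : Matrix (Fin 2) (Fin 2) ℂ) (ρ : Matrix (α × Fin 2 × Fin 2) (α × Fin 2 × Fin 2) ℂ)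

theorem IAU_mul_apply (x : α) (b c : Fin 2) (q : α × Fin 2 × Fin 2) :
    (IAU (α := α) U₀ U₁ * ρ) (x, b, c) q = ∑ d, gateBlock U₀ U₁ b c d * ρ (x, b, d) q := by
  simp [IAU, gateBlock, mul_apply, Fintype.sum_prod_type, ite_and]

theorem mul_conjTranspose_IAU_apply (p : α × Fin 2 × Fin 2) (x : α) (b c : Fin 2) :
    (ρ * (IAU (α := α) U₀ U₁)ᴴ) p (x, b, c) =
      ∑ d, ρ p (x, b, d) * star (gateBlock U₀ U₁ b c d) := by
  simp [IAU, gateBlock, mul_apply, Fintype.sum_prod_type, ite_and, apply_ite (starRingEnd ℂ)]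

theorem ptraceB_IAU_conj_apply (x x' : α) (c c' : Fin 2) :
    ptraceB (IAU U₀ U₁ * ρ * (IAU U₀ U₁ : Matrix _ _ ℂ)ᴴ) (x, c) (x', c') =
      ∑ b, (gateBlock U₀ U₁ b * ρ.submatrix (fun d => (x, b, d)) (fun d => (x', b, d)) *
        (gateBlock U₀ U₁ b)ᴴ) c c' := by
  refine Fintype.sum_congr _ _ fun b => ?_
  rw [mul_conjTranspose_IAU_apply]
  simp only [IAU_mul_apply]
  simp only [mul_apply, conjTranspose_apply, submatrix_apply]

end

theorem diagonal_gate_entanglement_non_robust_general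
    (ρ : Matrix (α × Fin 2 × Fin 2) (α × Fin 2 × Fin 2) ℂ)
    (hsep : SepABC ρ)
    (U₀ U₁ : Matrix (Fin 2) (Fin 2) ℂ) :
    SepAC (ptraceB (IAU U₀ U₁ * ρ * (IAU U₀ U₁ : Matrix _ _ ℂ)ᴴ)) := by
  obtain ⟨k, p, σ, τ, hp, hσ, hτ, hρ⟩ := hsep
  refine sepAC_of_posSemidef_decomposition (ι := Fin 2 × Fin k) _
    (fun bi => (p bi.2 : ℂ) • (σ bi.2).submatrix (·, bi.1) (·, bi.1))
    (fun bi => gateBlock U₀ U₁ bi.1 * τ bi.2 * (gateBlock U₀ U₁ bi.1)ᴴ)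
    (fun bi => ((hσ _).1.submatrix _).smul (by exact_mod_cast hp _))
    (fun bi => (hτ _).1.mul_mul_conjTranspose_same _) fun x x' c c' => ?_
  rw [ptraceB_IAU_conj_apply, Fintype.sum_prod_type]
  refine Fintype.sum_congr _ _ fun b => ?_
  have hblock : ρ.submatrix (fun d => (x, b, d)) (fun d => (x', b, d)) =
      ∑ i, (p i * σ i (x, b) (x', b)) • τ i := by
    ext d d'
    simp only [submatrix_apply, hρ, Matrix.sum_apply, Matrix.smul_apply, smul_eq_mul]
  simp [hblock, Matrix.mul_sum, Matrix.sum_mul, Matrix.sum_apply, mul_assoc]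

/-- Entanglement generated by a diagonal two-qubit gate is non-robust: if ρ is separable
across AB|C and we apply the block-diagonal gate on BC then trace out B, the result is
separable across A|C. -/
theorem diagonal_gate_entanglement_non_robust
    (ρ : Matrix (α × Fin 2 × Fin 2) (α × Fin 2 × Fin 2) ℂ)
    (hρ : IsState ρ) (hsep : SepABC ρ)
    (U₀ U₁ : Matrix (Fin 2) (Fin 2) ℂ)
    (hU₀ : U₀ᴴ * U₀ = 1) (hU₁ : U₁ᴴ * U₁ = 1) :
    SepAC (ptraceB (IAU U₀ U₁ * ρ * (IAU U₀ U₁ : Matrix _ _ ℂ)ᴴ)) :=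
  diagonal_gate_entanglement_non_robust_general ρ hsep U₀ U₁

end
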